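/- Sign vector classifies path components: let d > 1, e = 1, and c ∈ ℝ^l, and let K = {k : c_k < 0}. For every θ = (W¹, W²) ∈ H(c) and every k ∈ K one has W²_{1k} ≠ 0, so the sign vector s(θ) = (sign(W²_{1k}))_{k∈K} ∈ {−1, +1}^K is well defined. Then two parameters θ, θ' ∈ H(c) lie in the same path component of H(c) (i.e., there is a continuous path inside H(c) from θ to θ') if and only if s(θ) = s(θ'). -/

import Mathlib

/-!
The constraint of `H(c)` decouples over hidden neurons: `θ ∈ H(c)` iff for each `k` the pair
`(W¹_{k·}, W²_{1k})` lies on the hyperboloid `‖x‖² - y² = c_k` in `ℝ^d × ℝ`, so `H(c)` is a product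
of hyperboloids and paths can be built neuron by neuron. For `c_k < 0` the hyperboloid has the two
sheets `y = ±√(‖x‖² - c_k)`, each a graph over `ℝ^d`, and `y` cannot change sign along a path since
it never vanishes. For `c_k ≥ 0` it is the image of `S^{d-1} × ℝ` under
`(u, y) ↦ (√(c_k + y²) u, y)`, which is path connected because `d > 1`.
-/

/-- The invariant set `H(c)` for scalar output (`e = 1`): parameters `(W¹, W²)`
with `W¹ : Fin l → Fin d → ℝ`, `W² : Fin 1 → Fin l → ℝ`, such that
`∑ᵢ (W¹_{ki})² − (W²_{1k})² = c_k` for every hidden neuron `k`. -/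
def invariantSet (l d : ℕ) (c : Fin l → ℝ) :
    Set ((Fin l → Fin d → ℝ) × (Fin 1 → Fin l → ℝ)) :=
  {θ | ∀ k, ∑ i, (θ.1 k i) ^ 2 - (θ.2 0 k) ^ 2 = c k}

open Set

theorem Real.sign_mul_abs (r : ℝ) : Real.sign r * |r| = r := by
  rcases lt_trichotomy r 0 with h | rfl | h
  · rw [Real.sign_of_neg h, abs_of_neg h]; ring
  · simp
  · rw [Real.sign_of_pos h, abs_of_pos h]; ring

theorem Real.sign_sq_of_ne_zero {r : ℝ} (hr : r ≠ 0) : Real.sign r ^ 2 = 1 := by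
  rcases Real.sign_apply_eq_of_ne_zero r hr with h | h <;> simp [h]

theorem Real.sign_eq_of_joinedIn {s : Set ℝ} (hs : (0 : ℝ) ∉ s) {a b : ℝ} (h : JoinedIn s a b) :
    Real.sign a = Real.sign b := by
  obtain ⟨γ, hγ⟩ := h
  have hab : uIcc a b ⊆ s :=
    ((isPreconnected_range γ.continuous).ordConnected.uIcc_subset ⟨0, γ.source⟩
      ⟨1, γ.target⟩).trans (range_subset_iff.2 hγ)
  have ha : a ≠ 0 := fun h => hs (h ▸ hab left_mem_uIcc)
  have hb : b ≠ 0 := fun h => hs (h ▸ hab right_mem_uIcc)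
  rcases ha.lt_or_gt with ha | ha <;> rcases hb.lt_or_gt with hb | hb
  · rw [Real.sign_of_neg ha, Real.sign_of_neg hb]
  · exact absurd (hab (mem_uIcc.2 (Or.inl ⟨ha.le, hb.le⟩))) hs
  · exact absurd (hab (mem_uIcc.2 (Or.inr ⟨hb.le, ha.le⟩))) hs
  · rw [Real.sign_of_pos ha, Real.sign_of_pos hb]

theorem JoinedIn.sign_eq {X : Type*} [TopologicalSpace X] {S : Set X} {x y : X} {f : X → ℝ}
    (h : JoinedIn S x y) (hf : ContinuousOn f S) (hS : ∀ z ∈ S, f z ≠ 0) :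
    Real.sign (f x) = Real.sign (f y) :=
  Real.sign_eq_of_joinedIn (by rintro ⟨z, hz, hz0⟩; exact hS z hz hz0) (h.map_continuousOn hf)

section Hyperboloid

variable {E : Type*} [NormedAddCommGroup E]

variable (E) in
def hyperboloid (c : ℝ) : Set (E × ℝ) :=
  {p | ‖p.1‖ ^ 2 - p.2 ^ 2 = c}

variable {c : ℝ} {p q : E × ℝ}

theorem snd_ne_zero_of_mem_hyperboloid (hc : c < 0) (hp : p ∈ hyperboloid E c) : p.2 ≠ 0 := by
  intro h
  have hp : ‖p.1‖ ^ 2 - p.2 ^ 2 = c := hp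
  rw [h] at hp
  nlinarith [sq_nonneg ‖p.1‖]

theorem snd_eq_sign_mul_sqrt_of_mem_hyperboloid (hp : p ∈ hyperboloid E c) :
    p.2 = Real.sign p.2 * √(‖p.1‖ ^ 2 - c) := by
  have hp : ‖p.1‖ ^ 2 - c = p.2 ^ 2 := by rw [← hp]; ring
  rw [hp, Real.sqrt_sq_eq_abs, Real.sign_mul_abs]

theorem joinedIn_hyperboloid_of_neg [NormedSpace ℝ E] (hc : c < 0) (hp : p ∈ hyperboloid E c)
    (hq : q ∈ hyperboloid E c) (hpq : Real.sign p.2 = Real.sign q.2) :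
    JoinedIn (hyperboloid E c) p q := by
  let sheet : E → E × ℝ := fun x => (x, Real.sign p.2 * √(‖x‖ ^ 2 - c))
  have hsheet : range sheet ⊆ hyperboloid E c := by
    rintro _ ⟨x, rfl⟩
    show ‖x‖ ^ 2 - (Real.sign p.2 * √(‖x‖ ^ 2 - c)) ^ 2 = c
    rw [mul_pow, Real.sign_sq_of_ne_zero (snd_ne_zero_of_mem_hyperboloid hc hp),
      Real.sq_sqrt (by nlinarith [sq_nonneg ‖x‖])]
    ring
  have hp' : p = sheet p.1 := Prod.ext rfl (snd_eq_sign_mul_sqrt_of_mem_hyperboloid hp)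
  have hq' : q = sheet q.1 := Prod.ext rfl (by
    show q.2 = Real.sign p.2 * _
    rw [hpq]; exact snd_eq_sign_mul_sqrt_of_mem_hyperboloid hq)
  refine ((isPathConnected_range (by fun_prop : Continuous sheet)).joinedIn _ ?_ _ ?_).mono hsheet
  · exact hp' ▸ mem_range_self _
  · exact hq' ▸ mem_range_self _

variable [NormedSpace ℝ E]

theorem hyperboloid_eq_image_sphere_prod (hc : 0 ≤ c) (hS : (Metric.sphere (0 : E) 1).Nonempty) :
    hyperboloid E c =
      (fun v : E × ℝ => (√(c + v.2 ^ 2) • v.1, v.2)) '' (Metric.sphere 0 1 ×ˢ univ) := by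
  refine Subset.antisymm (fun ⟨x, y⟩ h => ?_) ?_
  · replace h : ‖x‖ ^ 2 - y ^ 2 = c := h
    have hx : √(c + y ^ 2) = ‖x‖ := by
      rw [← h, sub_add_cancel, Real.sqrt_sq (norm_nonneg x)]
    by_cases hx0 : x = 0
    · obtain ⟨u, hu⟩ := hS
      exact ⟨(u, y), ⟨hu, trivial⟩, by simp [hx, hx0]⟩
    · refine ⟨(‖x‖⁻¹ • x, y), ⟨?_, trivial⟩, ?_⟩
      · simp [norm_smul, hx0]
      · simp [hx, smul_smul, hx0]
  · rintro _ ⟨⟨u, y⟩, ⟨hu, -⟩, rfl⟩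
    show ‖√(c + y ^ 2) • u‖ ^ 2 - y ^ 2 = c
    rw [norm_smul, mem_sphere_zero_iff_norm.1 hu, Real.norm_of_nonneg (Real.sqrt_nonneg _),
      mul_one, Real.sq_sqrt (by positivity)]
    ring

theorem isPathConnected_hyperboloid_of_nonneg (hE : 1 < Module.rank ℝ E) (hc : 0 ≤ c) :
    IsPathConnected (hyperboloid E c) := by
  have hS := isPathConnected_sphere hE (0 : E) zero_le_one
  rw [hyperboloid_eq_image_sphere_prod hc hS.nonempty]
  exact (hS.prod isPathConnected_univ).image (by fun_prop)

theorem joinedIn_hyperboloid (hE : 1 < Module.rank ℝ E) (hp : p ∈ hyperboloid E c)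
    (hq : q ∈ hyperboloid E c) (hpq : c < 0 → Real.sign p.2 = Real.sign q.2) :
    JoinedIn (hyperboloid E c) p q := by
  rcases lt_or_ge c 0 with hc | hc
  · exact joinedIn_hyperboloid_of_neg hc hp hq (hpq hc)
  · exact (isPathConnected_hyperboloid_of_nonneg hE hc).joinedIn p hp q hq

end Hyperboloid

section Neurons

variable {l d : ℕ}

/-- The incoming weights `W¹_{k·}` are put in Euclidean space, where `‖W¹_{k·}‖² = ∑ᵢ (W¹_{ki})²`. -/
def neuron (θ : (Fin l → Fin d → ℝ) × (Fin 1 → Fin l → ℝ)) (k : Fin l) :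
    EuclideanSpace ℝ (Fin d) × ℝ :=
  (WithLp.toLp 2 (θ.1 k), θ.2 0 k)

def ofNeurons (p : Fin l → EuclideanSpace ℝ (Fin d) × ℝ) :
    (Fin l → Fin d → ℝ) × (Fin 1 → Fin l → ℝ) :=
  (fun k => WithLp.ofLp (p k).1, fun _ k => (p k).2)

theorem ofNeurons_neuron (θ : (Fin l → Fin d → ℝ) × (Fin 1 → Fin l → ℝ)) :
    ofNeurons (neuron θ) = θ := by
  ext k i
  · rfl
  · rw [Subsingleton.elim k 0]; rfl

theorem continuous_ofNeurons : Continuous (ofNeurons (l := l) (d := d)) := by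
  unfold ofNeurons; fun_prop

theorem mem_invariantSet_iff {c : Fin l → ℝ} {θ : (Fin l → Fin d → ℝ) × (Fin 1 → Fin l → ℝ)} :
    θ ∈ invariantSet l d c ↔ ∀ k, neuron θ k ∈ hyperboloid _ (c k) := by
  simp [invariantSet, hyperboloid, neuron, EuclideanSpace.real_norm_sq_eq]

end Neurons

/-- For `d > 1`, `e = 1`: on `H(c)` every output weight `W²_{1k}`
with `c_k < 0` is nonzero, and two parameters `θ, θ' ∈ H(c)` are joined by a
continuous path inside `H(c)` iff their sign vectors
`s(θ) = (sign(W²_{1k}))_{k : c_k < 0}` coincide. -/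
theorem sign_vector_classifies_path_components (l d : ℕ) (hd : 1 < d)
    (c : Fin l → ℝ) :
    (∀ θ ∈ invariantSet l d c, ∀ k, c k < 0 → θ.2 0 k ≠ 0) ∧
    (∀ θ ∈ invariantSet l d c, ∀ θ' ∈ invariantSet l d c,
      (JoinedIn (invariantSet l d c) θ θ' ↔
        ∀ k, c k < 0 → Real.sign (θ.2 0 k) = Real.sign (θ'.2 0 k))) := by
  have hE : 1 < Module.rank ℝ (EuclideanSpace ℝ (Fin d)) := by
    rw [← Module.finrank_eq_rank, finrank_euclideanSpace_fin]
    exact_mod_cast hd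
  have hne : ∀ θ ∈ invariantSet l d c, ∀ k, c k < 0 → θ.2 0 k ≠ 0 := fun θ hθ k hk =>
    snd_ne_zero_of_mem_hyperboloid hk (mem_invariantSet_iff.1 hθ k)
  refine ⟨hne, fun θ hθ θ' hθ' => ⟨fun h k hk => ?_, fun hs => ?_⟩⟩
  · exact h.sign_eq (by fun_prop : Continuous fun θ : (Fin l → Fin d → ℝ) × (Fin 1 → Fin l → ℝ) =>
      θ.2 0 k).continuousOn fun θ hθ => hne θ hθ k hk
  · have hjoin := (JoinedIn.pi fun k => joinedIn_hyperboloid hE (mem_invariantSet_iff.1 hθ k)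
      (mem_invariantSet_iff.1 hθ' k) (hs k)).map continuous_ofNeurons
    rw [ofNeurons_neuron, ofNeurons_neuron] at hjoin
    exact hjoin.mono (image_subset_iff.2 fun p hp =>
      mem_invariantSet_iff.2 fun k => hp k (mem_univ k))
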